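/- Let I = [a,b] with 0 ≤ a < b ≤ 1 and b − a < 1, and let S = {s ∈ ℝ : s + I ⊆ [0,1]} (= [−a, 1−b]). If f ∈ L¹([0,1]) and there exists a subset D ⊆ S which is dense in S such that for every s ∈ D one has f(x) = f(x+s) for almost every x ∈ I, then f is constant almost everywhere on [0,1]. -/

import Mathlib

open MeasureTheory Set Filter Metric Topology

noncomputable section

/-- If `f ∈ L¹([0,1])` is a.e. invariant on `I = [a,b]` under translation by every element
of a dense subset `D` of `S = {s : s + I ⊆ [0,1]}`, then `f` is a.e. constant on `[0,1]`. -/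
theorem statement0 (a b : ℝ) (ha : 0 ≤ a) (hab : a < b) (hb : b ≤ 1) (hlen : b - a < 1)
    (f : ℝ → ℂ) (hf : IntegrableOn f (Icc (0:ℝ) 1) volume)
    (D : Set ℝ)
    (hDS : D ⊆ {s : ℝ | ∀ x ∈ Icc a b, x + s ∈ Icc (0:ℝ) 1})
    (hdense : {s : ℝ | ∀ x ∈ Icc a b, x + s ∈ Icc (0:ℝ) 1} ⊆ closure D)
    (hshift : ∀ s ∈ D, ∀ᵐ x ∂(volume.restrict (Icc a b)), f x = f (x + s)) :
    ∃ c : ℂ, ∀ᵐ x ∂(volume.restrict (Icc (0:ℝ) 1)), f x = c := by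
  set g : ℝ → ℂ := (Icc (0:ℝ) 1).indicator f with hgdef
  have hg : Integrable g := (integrable_indicator_iff measurableSet_Icc).2 hf
  set F : ℝ → ℂ := fun t => ∫ x in (0:ℝ)..t, g x with hFdef
  have hFcont : Continuous F := hg.continuous_primitive 0
  have hFsub : ∀ u v : ℝ, ∫ x in u..v, g x = F v - F u := by
    intro u v
    rw [hFdef]
    rw [← intervalIntegral.integral_interval_sub_left (hg.intervalIntegrable)
      (hg.intervalIntegrable)]
  -- Step 1: translation invariance of interval integrals for all s ∈ [-a, 1-b]
  have key : ∀ u v : ℝ, a ≤ u → u ≤ v → v ≤ b → ∀ s : ℝ, -a ≤ s → s ≤ 1 - b →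
      F (v + s) - F (u + s) = F v - F u := by
    intro u v hau huv hvb
    set G : ℝ → ℂ := fun s => (F (v + s) - F (u + s)) - (F v - F u) with hGdef
    have hGcont : Continuous G := by
      apply Continuous.sub _ continuous_const
      exact (hFcont.comp (continuous_const.add continuous_id)).sub
        (hFcont.comp (continuous_const.add continuous_id))
    have hGD : EqOn G (fun _ => (0:ℂ)) D := by
      intro s hs
      have hs' : ∀ x ∈ Icc a b, x + s ∈ Icc (0:ℝ) 1 := hDS hs
      have hae : ∀ᵐ x ∂volume.restrict (Icc a b), g x = g (x + s) := by
        filter_upwards [hshift s hs, ae_restrict_mem measurableSet_Icc] with x hfx hxm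
        have hx01 : x ∈ Icc (0:ℝ) 1 := ⟨by linarith [hxm.1], by linarith [hxm.2]⟩
        rw [hgdef]
        simp only [indicator_of_mem hx01, indicator_of_mem (hs' x hxm)]
        exact hfx
      have hae2 : ∀ᵐ x ∂volume, x ∈ Set.uIoc u v → g x = g (x + s) := by
        have h3 := (ae_restrict_iff' measurableSet_Icc).1 hae
        have hsub : Set.uIoc u v ⊆ Icc a b := by
          rw [uIoc_of_le huv]
          exact Ioc_subset_Icc_self.trans (Icc_subset_Icc hau hvb)
        filter_upwards [h3] with x hx hxu
        exact hx (hsub hxu)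
      have hint : ∫ x in u..v, g x = ∫ x in u..v, g (x + s) :=
        intervalIntegral.integral_congr_ae hae2
      show (F (v + s) - F (u + s)) - (F v - F u) = 0
      have : F (v + s) - F (u + s) = F v - F u := by
        calc F (v + s) - F (u + s) = ∫ x in (u+s)..(v+s), g x := (hFsub _ _).symm
          _ = ∫ x in u..v, g (x + s) := (intervalIntegral.integral_comp_add_right g s).symm
          _ = ∫ x in u..v, g x := hint.symm
          _ = F v - F u := hFsub u v
      rw [this, sub_self]
    have hGcl : EqOn G (fun _ => (0:ℂ)) (closure D) :=
      hGD.closure hGcont continuous_const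
    intro s hs1 hs2
    have hsS : s ∈ {s : ℝ | ∀ x ∈ Icc a b, x + s ∈ Icc (0:ℝ) 1} := by
      intro x hx
      exact ⟨by linarith [hx.1], by linarith [hx.2]⟩
    have h0 : G s = 0 := hGcl (hdense hsS)
    have h0' : (F (v + s) - F (u + s)) - (F v - F u) = 0 := h0
    linear_combination h0'
  -- Step 2: neighboring shift invariance for intervals of length ≤ b - a
  have step2 : ∀ ℓ : ℝ, 0 ≤ ℓ → ℓ ≤ b - a → ∀ p q : ℝ, 0 ≤ q → q ≤ p → p ≤ 1 - ℓ →
      p - q ≤ 1 - (b - a) → F (p + ℓ) - F p = F (q + ℓ) - F q := by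
    intro ℓ hℓ0 hℓL p q hq0 hqp hp1 hpq
    set u : ℝ := max a (p - 1 + b) with hu
    have hau : a ≤ u := le_max_left _ _
    have hub : u + ℓ ≤ b := by
      have : u ≤ b - ℓ := max_le (by linarith) (by linarith)
      linarith
    have hup : u ≥ p - 1 + b := le_max_right _ _
    have hupa : u ≤ p + a := max_le (by linarith) (by linarith)
    have huqa : u ≤ q + a := max_le (by linarith) (by linarith)
    have h1 := key u (u + ℓ) hau (by linarith) hub (p - u) (by linarith) (by linarith)
    have h2 := key u (u + ℓ) hau (by linarith) hub (q - u) (by linarith) (by linarith)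
    have e1 : u + ℓ + (p - u) = p + ℓ := by ring
    have e2 : u + (p - u) = p := by ring
    have e3 : u + ℓ + (q - u) = q + ℓ := by ring
    have e4 : u + (q - u) = q := by ring
    rw [e1, e2] at h1
    rw [e3, e4] at h2
    rw [h1, h2]
  -- Step 3: interval integrals depend only on length (for lengths ≤ b - a)
  have step3 : ∀ ℓ : ℝ, 0 ≤ ℓ → ℓ ≤ b - a → ∀ p : ℝ, 0 ≤ p → p ≤ 1 - ℓ →
      F (p + ℓ) - F p = F ℓ - F 0 := by
    intro ℓ hℓ0 hℓL
    have hδ : 0 < 1 - (b - a) := by linarith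
    have hn : ∀ n : ℕ, ∀ p : ℝ, 0 ≤ p → p ≤ 1 - ℓ → p ≤ n * (1 - (b - a)) →
        F (p + ℓ) - F p = F ℓ - F 0 := by
      intro n
      induction n with
      | zero =>
        intro p hp0 _ hpn
        have hp : p = 0 := le_antisymm (by simpa using hpn) hp0
        subst hp
        rw [zero_add]
      | succ n ih =>
        intro p hp0 hp1 hpn
        by_cases hc : p ≤ n * (1 - (b - a))
        · exact ih p hp0 hp1 hc
        · push_neg at hc
          by_cases hc2 : p ≤ 1 - (b - a)
          · have h := step2 ℓ hℓ0 hℓL p 0 le_rfl hp0 hp1 (by linarith)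
            rw [h, zero_add]
          · push_neg at hc2
            have h := step2 ℓ hℓ0 hℓL p (p - (1 - (b - a))) (by linarith) (by linarith)
              hp1 (by linarith)
            rw [h]
            apply ih (p - (1 - (b - a))) (by linarith) (by linarith)
            push_cast at hpn
            linarith
    intro p hp0 hp1
    obtain ⟨n, hn'⟩ := exists_nat_ge (p / (1 - (b - a)))
    exact hn n p hp0 hp1 (by rw [div_le_iff₀ hδ] at hn'; linarith)
  -- averages over small balls are independent of the center
  set φ : ℝ → ℂ := fun r => ((ENNReal.ofReal (2 * r)).toReal)⁻¹ • (F (2 * r) - F 0) with hφ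
  have havg : ∀ x r : ℝ, 0 < r → 2 * r ≤ b - a → r ≤ x → x ≤ 1 - r →
      (⨍ y in closedBall x r, g y) = φ r := by
    intro x r hr hrL hrx hx1
    rw [setAverage_eq, Real.closedBall_eq_Icc, integral_Icc_eq_integral_Ioc]
    have h1 : ∫ y in Ioc (x - r) (x + r), g y = ∫ y in (x - r)..(x + r), g y :=
      (intervalIntegral.integral_of_le (by linarith)).symm
    rw [h1, hFsub, measureReal_def, Real.volume_Icc]
    have e2 : x + r - (x - r) = 2 * r := by ring
    rw [e2]
    have h3 : F (x + r) - F (x - r) = F (2 * r) - F 0 := by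
      have e : x + r = (x - r) + 2 * r := by ring
      rw [e]
      exact step3 (2 * r) (by linarith) hrL (x - r) (by linarith) (by linarith)
    rw [h3]
  -- Lebesgue differentiation
  have main : ∀ᵐ x ∂(volume : Measure ℝ), x ∈ Ioo (0:ℝ) 1 →
      Tendsto φ (𝓝[>] (0:ℝ)) (𝓝 (g x)) := by
    filter_upwards [IsUnifLocDoublingMeasure.ae_tendsto_average (μ := volume)
      hg.locallyIntegrable 1] with x hx hxI
    have h1 : Tendsto (fun r : ℝ => ⨍ y in closedBall x r, g y) (𝓝[>] (0:ℝ)) (𝓝 (g x)) := by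
      apply hx (fun _ => x) (fun r => r) tendsto_id
      filter_upwards [self_mem_nhdsWithin] with r hr
      exact mem_closedBall_self (by simpa using le_of_lt hr)
    apply h1.congr'
    obtain ⟨hx0, hx1⟩ := hxI
    set r₀ : ℝ := min x (min (1 - x) ((b - a) / 2)) with hr₀def
    have hr₀ : 0 < r₀ := lt_min hx0 (lt_min (by linarith) (by linarith))
    filter_upwards [Ioo_mem_nhdsGT_of_mem (⟨le_refl (0:ℝ), hr₀⟩ : (0:ℝ) ∈ Ico (0:ℝ) r₀)]
      with r hr
    have hrx : r ≤ x := le_trans hr.2.le (min_le_left _ _)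
    have hr1x : r ≤ 1 - x := le_trans hr.2.le ((min_le_right _ _).trans (min_le_left _ _))
    have hrL : r ≤ (b - a) / 2 := le_trans hr.2.le ((min_le_right _ _).trans (min_le_right _ _))
    exact havg x r hr.1 (by linarith) hrx (by linarith)
  -- choose a reference point
  set T : Set ℝ := {x : ℝ | Tendsto φ (𝓝[>] (0:ℝ)) (𝓝 (g x))} with hT
  have hIT : volume (Ioo (0:ℝ) 1 \ T) = 0 := by
    apply measure_mono_null _ (ae_iff.1 main)
    intro x hx
    simp only [mem_setOf_eq, Classical.not_imp]
    exact ⟨hx.1, hx.2⟩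
  have hne : volume (Ioo (0:ℝ) 1 ∩ T) ≠ 0 := by
    intro h0
    have hsub : Ioo (0:ℝ) 1 ⊆ (Ioo (0:ℝ) 1 \ T) ∪ (Ioo (0:ℝ) 1 ∩ T) := by
      intro x hx
      by_cases hxT : x ∈ T
      · exact Or.inr ⟨hx, hxT⟩
      · exact Or.inl ⟨hx, hxT⟩
    have : volume (Ioo (0:ℝ) 1) = 0 := by
      refine measure_mono_null hsub ?_
      exact measure_union_null hIT h0
    simp [Real.volume_Ioo] at this
  obtain ⟨x₀, hx₀⟩ := nonempty_of_measure_ne_zero hne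
  refine ⟨g x₀, ?_⟩
  have hne0 : ∀ᵐ x : ℝ ∂(volume : Measure ℝ), x ≠ (0:ℝ) := by
    rw [ae_iff]
    simpa using measure_singleton (0:ℝ)
  have hne1 : ∀ᵐ x : ℝ ∂(volume : Measure ℝ), x ≠ (1:ℝ) := by
    rw [ae_iff]
    simpa using measure_singleton (1:ℝ)
  filter_upwards [ae_restrict_mem measurableSet_Icc, ae_restrict_of_ae main,
    ae_restrict_of_ae hne0, ae_restrict_of_ae hne1] with x hxm hxT hx0 hx1
  have hxI : x ∈ Ioo (0:ℝ) 1 :=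
    ⟨lt_of_le_of_ne hxm.1 (Ne.symm hx0), lt_of_le_of_ne hxm.2 hx1⟩
  have hgx : g x = g x₀ := tendsto_nhds_unique (hxT hxI) hx₀.2
  rw [← hgx, hgdef]
  exact (indicator_of_mem hxm f).symm

end
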